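/- Let H be a complex Hilbert space and let a : H → H be a continuous linear operator admitting a parametrix p : H → H. Then the commutator [a,p] = a∘p − p∘a is of finite rank, the kernel of a and the cokernel H/range(a) are finite-dimensional, and Tr([a,p]) = dim ker(a) − dim (H/range(a)); in particular this trace is independent of the choice of parametrix p. -/

import Mathlib

/-!
Over a field, `a` has a generalized inverse `q` with `a q a = a`. Then `1 - q a` and `1 - a q` are
idempotents whose ranges are `ker a` and a complement of `range a`, so their traces are the
dimensions of the kernel and of the cokernel. The parametrix differs from `q` by the finite-rank
map `r = p - q`, and `tr (a r) = tr (r a)` expands to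
`tr (a p - 1) + tr (1 - a q) = tr (p a - 1) + tr (1 - q a)`; since `[a, p] = (a p - 1) - (p a - 1)`,
this is the index formula.
-/

/-- A continuous linear map is of finite rank if its range is finite dimensional. -/
def FiniteRank {V W : Type*} [NormedAddCommGroup V] [NormedSpace ℂ V]
    [NormedAddCommGroup W] [NormedSpace ℂ W] (T : V →L[ℂ] W) : Prop :=
  FiniteDimensional ℂ (LinearMap.range (T : V →ₗ[ℂ] W))

/-- `p` is a parametrix for `a`: `a∘p - id` and `p∘a - id` are finite rank. -/
def IsParametrix {H : Type*} [NormedAddCommGroup H] [NormedSpace ℂ H]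
    (a p : H →L[ℂ] H) : Prop :=
  FiniteRank (a.comp p - ContinuousLinearMap.id ℂ H) ∧
    FiniteRank (p.comp a - ContinuousLinearMap.id ℂ H)

/-- The trace of a (finite-rank) continuous operator `T`, defined as the trace of the
endomorphism induced by `T` on the subspace `range T`. -/
noncomputable def fTrace {V : Type*} [NormedAddCommGroup V] [NormedSpace ℂ V]
    (T : V →L[ℂ] V) : ℂ :=
  LinearMap.trace ℂ (LinearMap.range (T : V →ₗ[ℂ] V))
    ((T : V →ₗ[ℂ] V).restrict
      (p := LinearMap.range (T : V →ₗ[ℂ] V)) (q := LinearMap.range (T : V →ₗ[ℂ] V))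
      (fun x _hx => ⟨x, rfl⟩))

open Module Submodule

namespace LinearMap

variable {K V W : Type*} [Field K] [AddCommGroup V] [Module K V] [AddCommGroup W] [Module K W]

/-- Meaningful only for finite-rank `f`: on an infinite-dimensional range, `trace` is `0`. -/
noncomputable def rangeTrace (f : V →ₗ[K] V) : K :=
  trace K (range f) (f.restrict fun x _ => mem_range_self f x)

theorem rangeTrace_eq_trace_restrict {f : V →ₗ[K] V} {N : Submodule K V} [Module.Finite K N]
    (hN : range f ≤ N) :
    rangeTrace f = trace K N (f.restrict fun x _ => hN (mem_range_self f x)) := by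
  have : Module.Finite K (range f) := Submodule.finiteDimensional_of_le hN
  have hfactor : f.restrict (fun x _ => hN (mem_range_self f x)) =
      inclusion hN ∘ₗ f.codRestrict (range f) (mem_range_self f) ∘ₗ N.subtype := rfl
  rw [hfactor, trace_comp_comm', rangeTrace]
  rfl

theorem rangeTrace_comp_eq_trace_comp {P : Type*} [AddCommGroup P] [Module K P] [Module.Finite K P]
    (v : P →ₗ[K] V) (w : V →ₗ[K] P) : rangeTrace (v ∘ₗ w) = trace K P (w ∘ₗ v) := by
  have hle : range (v ∘ₗ w) ≤ range v := range_comp_le_range w v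
  rw [rangeTrace_eq_trace_restrict hle]
  have hfactor : (v ∘ₗ w).restrict (fun x _ => hle (mem_range_self _ x)) =
      v.rangeRestrict ∘ₗ w ∘ₗ (range v).subtype := rfl
  rw [hfactor, ← trace_comp_comm']
  rfl

theorem rangeTrace_comp_comm (f : V →ₗ[K] W) {g : W →ₗ[K] V} (hg : g.HasFiniteRange) :
    rangeTrace (f ∘ₗ g) = rangeTrace (g ∘ₗ f) := by
  have : Module.Finite K (range g) := Module.Finite.iff_fg.mpr hg
  have hfg : f ∘ₗ g = (f ∘ₗ (range g).subtype) ∘ₗ g.rangeRestrict := rfl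
  have hgf : g ∘ₗ f = (range g).subtype ∘ₗ g.rangeRestrict ∘ₗ f := rfl
  rw [hfg, hgf, rangeTrace_comp_eq_trace_comp, rangeTrace_comp_eq_trace_comp, comp_assoc]

theorem rangeTrace_add {f g : V →ₗ[K] V} (hf : f.HasFiniteRange) (hg : g.HasFiniteRange) :
    rangeTrace (f + g) = rangeTrace f + rangeTrace g := by
  have : Module.Finite K ↥(range f ⊔ range g) := Module.Finite.iff_fg.mpr (hf.sup hg)
  rw [rangeTrace_eq_trace_restrict (range_add_le f g),
    rangeTrace_eq_trace_restrict (le_sup_left (b := range g)),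
    rangeTrace_eq_trace_restrict (le_sup_right (a := range f)), ← map_add]
  rfl

theorem rangeTrace_sub {f g : V →ₗ[K] V} (hf : f.HasFiniteRange) (hg : g.HasFiniteRange) :
    rangeTrace (f - g) = rangeTrace f - rangeTrace g := by
  have : Module.Finite K ↥(range f ⊔ range g) := Module.Finite.iff_fg.mpr (hf.sup hg)
  have hle : range (f - g) ≤ range f ⊔ range g := by
    rw [sub_eq_add_neg, ← range_neg g]; exact range_add_le f (-g)
  rw [rangeTrace_eq_trace_restrict hle, rangeTrace_eq_trace_restrict (le_sup_left (b := range g)),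
    rangeTrace_eq_trace_restrict (le_sup_right (a := range f)), ← map_sub]
  rfl

theorem IsIdempotentElem.rangeTrace_eq_finrank {f : V →ₗ[K] V} (hf : IsIdempotentElem f)
    (hfin : f.HasFiniteRange) : rangeTrace f = finrank K (range f) := by
  have : Module.Finite K (range f) := Module.Finite.iff_fg.mpr hfin
  have hid : f.restrict (fun x _ => mem_range_self f x) = LinearMap.id := by
    ext ⟨_, x, rfl⟩
    exact congr($hf x)
  rw [rangeTrace, hid, trace_id]

theorem exists_comp_comp_eq_self (a : V →ₗ[K] W) : ∃ q : W →ₗ[K] V, a ∘ₗ q ∘ₗ a = a := by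
  obtain ⟨s, hs⟩ := a.rangeRestrict.exists_rightInverse_of_surjective a.range_rangeRestrict
  obtain ⟨q, hq⟩ := s.exists_extend
  refine ⟨q, ext fun x => ?_⟩
  have hqa : q (a x) = s (a.rangeRestrict x) := congr($hq (a.rangeRestrict x))
  simpa [hqa] using congr(((↑) : range a → W) ($hs (a.rangeRestrict x)))

section GeneralizedInverse

variable {a : V →ₗ[K] W} {q : W →ₗ[K] V}

theorem isIdempotentElem_comp_of_comp_comp_eq_self (h : a ∘ₗ q ∘ₗ a = a) :
    IsIdempotentElem (q ∘ₗ a) :=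
  show q ∘ₗ (a ∘ₗ q ∘ₗ a) = q ∘ₗ a by rw [h]

theorem isIdempotentElem_comp_of_comp_comp_eq_self' (h : a ∘ₗ q ∘ₗ a = a) :
    IsIdempotentElem (a ∘ₗ q) :=
  show (a ∘ₗ q ∘ₗ a) ∘ₗ q = a ∘ₗ q by rw [h]

theorem range_one_sub_comp_eq_ker (h : a ∘ₗ q ∘ₗ a = a) : range (1 - q ∘ₗ a) = ker a := by
  rw [← IsIdempotentElem.ker_eq_range_one_sub (isIdempotentElem_comp_of_comp_comp_eq_self h)]
  refine le_antisymm (fun x hx => ?_) (ker_le_ker_comp a q)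
  have hqax : q (a x) = 0 := hx
  simpa [hqax] using congr($h x).symm

theorem isCompl_range_range_one_sub_comp (h : a ∘ₗ q ∘ₗ a = a) :
    IsCompl (range a) (range (1 - a ∘ₗ q)) := by
  have hidem := isIdempotentElem_comp_of_comp_comp_eq_self' h
  have hrange : range (a ∘ₗ q) = range a := by
    refine le_antisymm (range_comp_le_range q a) ?_
    conv_lhs => rw [← h, ← comp_assoc]
    exact range_comp_le_range a (a ∘ₗ q)
  rw [← hrange, ← IsIdempotentElem.ker_eq_range_one_sub hidem]
  exact IsIdempotentElem.isCompl hidem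

end GeneralizedInverse

section Parametrix

variable {a : V →ₗ[K] W} {p : W →ₗ[K] V}

theorem finite_ker_of_hasFiniteRange_comp_sub_id (hpa : (p ∘ₗ a - id).HasFiniteRange) :
    Module.Finite K (ker a) := by
  have : Module.Finite K (range (p ∘ₗ a - id)) := Module.Finite.iff_fg.mpr hpa
  refine Submodule.finiteDimensional_of_le (S₂ := range (p ∘ₗ a - id)) fun x hx => ?_
  exact ⟨-x, by simp [mem_ker.mp hx]⟩

theorem finite_quotient_range_of_hasFiniteRange_comp_sub_id
    (hap : (a ∘ₗ p - id).HasFiniteRange) : Module.Finite K (W ⧸ range a) := by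
  refine hap.cofg_ker.of_le fun y hy => ⟨p y, ?_⟩
  simpa [sub_eq_zero] using hy

theorem rangeTrace_comp_sub_id_sub_rangeTrace_comp_sub_id
    (hap : (a ∘ₗ p - id).HasFiniteRange) (hpa : (p ∘ₗ a - id).HasFiniteRange) :
    rangeTrace (a ∘ₗ p - id) - rangeTrace (p ∘ₗ a - id) =
      (finrank K (ker a) : K) - finrank K (W ⧸ range a) := by
  obtain ⟨q, hq⟩ := exists_comp_comp_eq_self a
  have := finite_ker_of_hasFiniteRange_comp_sub_id hpa
  have := finite_quotient_range_of_hasFiniteRange_comp_sub_id hap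
  have hKer := range_one_sub_comp_eq_ker hq
  let eCoker := quotientEquivOfIsCompl _ _ (isCompl_range_range_one_sub_comp hq)
  have hKerFin : (1 - q ∘ₗ a).HasFiniteRange := by
    rw [HasFiniteRange, hKer]; exact Module.Finite.iff_fg.mp inferInstance
  have hCokerFin : (1 - a ∘ₗ q).HasFiniteRange :=
    Module.Finite.iff_fg.mp (Module.Finite.equiv eCoker)
  have htrKer : rangeTrace (1 - q ∘ₗ a) = (finrank K (ker a) : K) := by
    rw [IsIdempotentElem.rangeTrace_eq_finrank
      (isIdempotentElem_comp_of_comp_comp_eq_self hq).one_sub hKerFin, hKer]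
  have htrCoker : rangeTrace (1 - a ∘ₗ q) = (finrank K (W ⧸ range a) : K) := by
    rw [IsIdempotentElem.rangeTrace_eq_finrank
      (isIdempotentElem_comp_of_comp_comp_eq_self' hq).one_sub hCokerFin, eCoker.finrank_eq]
  have hdiffFin : (p - q).HasFiniteRange := by
    rw [show p - q = (1 - q ∘ₗ a) ∘ₗ p + q ∘ₗ (a ∘ₗ p - id) by ext; simp]
    exact (hKerFin.comp_right p).add (hap.comp_left q)
  have hcomm := rangeTrace_comp_comm a hdiffFin
  rw [show a ∘ₗ (p - q) = (a ∘ₗ p - id) + (1 - a ∘ₗ q) by ext; simp,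
    show (p - q) ∘ₗ a = (p ∘ₗ a - id) + (1 - q ∘ₗ a) by ext; simp,
    rangeTrace_add hap hCokerFin, rangeTrace_add hpa hKerFin, htrKer, htrCoker] at hcomm
  linear_combination hcomm

end Parametrix

end LinearMap

section ContinuousLinearMap

variable {V W : Type*} [NormedAddCommGroup V] [NormedSpace ℂ V] [NormedAddCommGroup W]
  [NormedSpace ℂ W]

theorem finiteRank_iff_hasFiniteRange (T : V →L[ℂ] W) :
    FiniteRank T ↔ (T : V →ₗ[ℂ] W).HasFiniteRange :=
  Module.Finite.iff_fg

theorem fTrace_eq_rangeTrace (T : V →L[ℂ] V) : fTrace T = (T : V →ₗ[ℂ] V).rangeTrace :=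
  rfl

end ContinuousLinearMap

theorem stmt5_general {H : Type*} [NormedAddCommGroup H] [InnerProductSpace ℂ H]
    (a p : H →L[ℂ] H) (hp : IsParametrix a p) :
    FiniteRank (a.comp p - p.comp a) ∧
    FiniteDimensional ℂ (LinearMap.ker (a : H →ₗ[ℂ] H)) ∧
    FiniteDimensional ℂ (H ⧸ LinearMap.range (a : H →ₗ[ℂ] H)) ∧
    fTrace (a.comp p - p.comp a) =
      (Module.finrank ℂ (LinearMap.ker (a : H →ₗ[ℂ] H)) : ℂ) -
        (Module.finrank ℂ (H ⧸ LinearMap.range (a : H →ₗ[ℂ] H)) : ℂ) := by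
  have hap : ((a : H →ₗ[ℂ] H) ∘ₗ p - LinearMap.id).HasFiniteRange :=
    (finiteRank_iff_hasFiniteRange _).mp hp.1
  have hpa : ((p : H →ₗ[ℂ] H) ∘ₗ a - LinearMap.id).HasFiniteRange :=
    (finiteRank_iff_hasFiniteRange _).mp hp.2
  have hcomm : ((a.comp p - p.comp a : H →L[ℂ] H) : H →ₗ[ℂ] H) =
      ((a : H →ₗ[ℂ] H) ∘ₗ p - LinearMap.id) - ((p : H →ₗ[ℂ] H) ∘ₗ a - LinearMap.id) := by
    ext; simp
  refine ⟨?_, LinearMap.finite_ker_of_hasFiniteRange_comp_sub_id hpa,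
    LinearMap.finite_quotient_range_of_hasFiniteRange_comp_sub_id hap, ?_⟩
  · rw [finiteRank_iff_hasFiniteRange, hcomm]
    exact hap.sub hpa
  · rw [fTrace_eq_rangeTrace, hcomm, LinearMap.rangeTrace_sub hap hpa]
    exact LinearMap.rangeTrace_comp_sub_id_sub_rangeTrace_comp_sub_id hap hpa

theorem stmt5 {H : Type*} [NormedAddCommGroup H] [InnerProductSpace ℂ H] [CompleteSpace H]
    (a p : H →L[ℂ] H) (hp : IsParametrix a p) :
    FiniteRank (a.comp p - p.comp a) ∧
    FiniteDimensional ℂ (LinearMap.ker (a : H →ₗ[ℂ] H)) ∧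
    FiniteDimensional ℂ (H ⧸ LinearMap.range (a : H →ₗ[ℂ] H)) ∧
    fTrace (a.comp p - p.comp a) =
      (Module.finrank ℂ (LinearMap.ker (a : H →ₗ[ℂ] H)) : ℂ) -
        (Module.finrank ℂ (H ⧸ LinearMap.range (a : H →ₗ[ℂ] H)) : ℂ) :=
  stmt5_general a p hp
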